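/- arXiv:2005.13320 — 4 statements merged into one kernel-verified Lean document; each statement's English description precedes it below -/
import Mathlib

section
/- Let G be a rooted graph with root r. If for any two vertices u and v of G there exists a pseudo-median of the triple (u, v, r) of size 0 (i.e., a median), then every daisy graph of G with respect to r is an isometric subgraph of G. -/
/-!
Let `u, v` lie in the daisy and let `m` be a median of `(u, v, r)`. Gluing shortest `u,m`- and
`m,v`-paths gives a shortest `u,v`-path inside `I(u,m) ∪ I(m,v)`. Since `m ∈ I(u,r)`, we have
`I(u,m) ⊆ I(u,r) = I(r,u)`, and `I(r,u) ⊆ I(r,a)` whenever `u ∈ I(r,a)`; so this half of the path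
stays in the daisy, and likewise the other half. A vertex set containing a shortest path between
any two of its vertices induces an isometric subgraph.
-/

open SimpleGraph

namespace Daisy

variable {V : Type*}

/-- The interval `I_G(u,v)`: vertices lying on shortest `u,v`-paths. -/
def interval (G : SimpleGraph V) (u v : V) : Set V :=
  {x | G.dist u x + G.dist x v = G.dist u v}

/-- The vertex set of the daisy graph of `G` with respect to the root `r`, generated by `X`. -/
def daisySet (G : SimpleGraph V) (r : V) (X : Set V) : Set V :=
  ⋃ v ∈ X, interval G r v

/-- The subgraph of `G` induced by `S` is an isometric subgraph of `G`. -/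
def IsIsometricSubset (G : SimpleGraph V) (S : Set V) : Prop :=
  ∀ u v : S, (G.induce S).dist u v = G.dist u.1 v.1

/-- Some shortest `u,v`-path of `G` contains both `x` and `y`. -/
def OnShortestPath (G : SimpleGraph V) (u v x y : V) : Prop :=
  ∃ p : G.Walk u v, p.length = G.dist u v ∧ x ∈ p.support ∧ y ∈ p.support

/-- Conditions 1 and 2 of the definition of a pseudo-median `(x,y,z)` of the triple `(u,v,w)`. -/
def PseudoMedianConds (G : SimpleGraph V) (u v w x y z : V) : Prop :=
  OnShortestPath G u v x y ∧ OnShortestPath G v w y z ∧ OnShortestPath G u w x z ∧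
  G.dist x y = G.dist y z ∧ G.dist y z = G.dist x z

/-- `(x,y,z)` is a pseudo-median of the triple `(u,v,w)` in `G`:
it satisfies the path and equidistance conditions, and `d(x,y)` is minimal under them. -/
def IsPseudoMedian (G : SimpleGraph V) (u v w x y z : V) : Prop :=
  PseudoMedianConds G u v w x y z ∧
  ∀ x' y' z' : V, PseudoMedianConds G u v w x' y' z' → G.dist x y ≤ G.dist x' y'

/-- The triple `(u,v,w)` has a pseudo-median of size `s` in `G`. -/
def HasPseudoMedianOfSize (G : SimpleGraph V) (u v w : V) (s : ℕ) : Prop :=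
  ∃ x y z : V, IsPseudoMedian G u v w x y z ∧ G.dist x y = s

def IsMedian (G : SimpleGraph V) (u v w m : V) : Prop :=
  m ∈ interval G u v ∧ m ∈ interval G v w ∧ m ∈ interval G u w

section

variable {G : SimpleGraph V}

lemma interval_comm (u v : V) : interval G u v = interval G v u := by
  ext x
  simp only [interval, Set.mem_ofPred_eq, G.dist_comm (u := u), G.dist_comm (v := v)]
  omega

lemma mem_interval_of_mem_support {u v x : V} (p : G.Walk u v) (hp : p.length = G.dist u v)
    (hx : x ∈ p.support) : x ∈ interval G u v := by
  classical
  have hux := G.dist_le (p.takeUntil x hx)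
  have hxv := G.dist_le (p.dropUntil x hx)
  have hsplit := congrArg Walk.length (p.take_spec hx)
  rw [Walk.length_append] at hsplit
  have htri := (p.takeUntil x hx).reachable.dist_triangle_left v
  simp only [interval, Set.mem_ofPred_eq]
  omega

lemma interval_subset_interval (hconn : G.Connected) {r a u : V} (hu : u ∈ interval G r a) :
    interval G r u ⊆ interval G r a := by
  intro w hw
  simp only [interval, Set.mem_ofPred_eq] at hu hw ⊢
  have hrw : G.dist r a ≤ G.dist r w + G.dist w a := hconn.dist_triangle
  have hwa : G.dist w a ≤ G.dist w u + G.dist u a := hconn.dist_triangle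
  omega

lemma interval_subset_daisySet (hconn : G.Connected) {r u m : V} {X : Set V}
    (hu : u ∈ daisySet G r X) (hm : m ∈ interval G u r) : interval G u m ⊆ daisySet G r X := by
  simp only [daisySet, Set.mem_iUnion] at hu
  obtain ⟨a, ha, hua⟩ := hu
  calc interval G u m ⊆ interval G u r := interval_subset_interval hconn hm
    _ = interval G r u := interval_comm u r
    _ ⊆ interval G r a := interval_subset_interval hconn hua
    _ ⊆ daisySet G r X := Set.subset_biUnion_of_mem ha

lemma exists_walk_length_eq_dist_through (hconn : G.Connected) {u v m : V}
    (hm : m ∈ interval G u v) : ∃ p : G.Walk u v, p.length = G.dist u v ∧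
      ∀ x ∈ p.support, x ∈ interval G u m ∪ interval G m v := by
  obtain ⟨p, hp⟩ := hconn.exists_walk_length_eq_dist u m
  obtain ⟨q, hq⟩ := hconn.exists_walk_length_eq_dist m v
  refine ⟨p.append q, by rw [Walk.length_append, hp, hq]; exact hm, fun x hx => ?_⟩
  rcases (p.mem_support_append_iff q).mp hx with hx | hx
  · exact .inl (mem_interval_of_mem_support p hp hx)
  · exact .inr (mem_interval_of_mem_support q hq hx)

lemma HasPseudoMedianOfSize.exists_isMedian (hconn : G.Connected) {u v w : V}
    (h : HasPseudoMedianOfSize G u v w 0) : ∃ m, IsMedian G u v w m := by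
  obtain ⟨x, y, z, ⟨⟨⟨p, hp, hx, -⟩, ⟨q, hq, hy, -⟩, ⟨s, hs, -, hz⟩, hxy, hyz⟩, -⟩, hsize⟩ := h
  have hxy' : x = y := hconn.dist_eq_zero_iff.mp hsize
  have hyz' : y = z := hconn.dist_eq_zero_iff.mp (hxy ▸ hsize)
  subst hxy' hyz'
  exact ⟨x, mem_interval_of_mem_support p hp hx, mem_interval_of_mem_support q hq hy,
    mem_interval_of_mem_support s hs hz⟩

lemma isIsometricSubset_of_exists_walk {S : Set V}
    (h : ∀ u ∈ S, ∀ v ∈ S, ∃ p : G.Walk u v, p.length = G.dist u v ∧ ∀ x ∈ p.support, x ∈ S) :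
    IsIsometricSubset G S := by
  rintro ⟨u, hu⟩ ⟨v, hv⟩
  obtain ⟨p, hp, hpS⟩ := h u hu v hv
  apply le_antisymm
  · have hlen : (p.induce S hpS).length = p.length := by
      rw [← Walk.length_map (Embedding.induce S).toHom, p.map_induce hpS]; rfl
    exact hp ▸ hlen ▸ dist_le (p.induce S hpS)
  · obtain ⟨q, hq⟩ := (p.induce S hpS).reachable.exists_walk_length_eq_dist
    rw [← hq, ← Walk.length_map (Embedding.induce S).toHom]
    exact G.dist_le _

end

/-- If for any two vertices `u`, `v` of the connected rooted graph `G` with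
root `r` the triple `(u,v,r)` has a pseudo-median of size 0 (a median), then every daisy graph
of `G` with respect to `r` is an isometric subgraph of `G`. -/
theorem daisy_isometric_of_pseudoMedian_size_zero
    (G : SimpleGraph V) (hconn : G.Connected) (r : V)
    (h : ∀ u v : V, HasPseudoMedianOfSize G u v r 0) :
    ∀ X : Set V, IsIsometricSubset G (daisySet G r X) := by
  intro X
  refine isIsometricSubset_of_exists_walk fun u hu v hv => ?_
  obtain ⟨m, hm_uv, hm_vr, hm_ur⟩ := (h u v).exists_isMedian hconn
  obtain ⟨p, hp, hpm⟩ := exists_walk_length_eq_dist_through hconn hm_uv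
  have hu_side := interval_subset_daisySet hconn hu hm_ur
  have hv_side := interval_subset_daisySet hconn hv hm_vr
  rw [interval_comm m v] at hpm
  exact ⟨p, hp, fun x hx => (hpm x hx).elim (@hu_side x) (@hv_side x)⟩

end Daisy
end

section
/- Let G be a rooted graph with root r that satisfies the rooted triangle condition. If every daisy graph of G with respect to r is an isometric subgraph of G, then for any two vertices u and v of G there exists a pseudo-median of the triple (u, v, r) of size 0 or 1. -/
open SimpleGraph

namespace Daisy

variable {V : Type*}

/-- The rooted triangle condition for a rooted graph `G` with root `r`. -/
def RootedTriangleCondition (G : SimpleGraph V) (r : V) : Prop :=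
  ∀ v w : V, G.Adj v w → G.dist r v = G.dist r w → 2 ≤ G.dist r v →
    ∃ x : V, G.Adj x v ∧ G.Adj x w ∧ G.dist r x + 1 = G.dist r v

lemma walk_sep {G : SimpleGraph V} {A B : Set V} {a b : V} (p : G.Walk a b) :
    a ∈ A → b ∈ B → (∀ s ∈ p.support, s ∈ A ∪ B) →
    (∃ m ∈ p.support, m ∈ A ∧ m ∈ B) ∨
    ∃ x y, G.Adj x y ∧ x ∈ p.support ∧ y ∈ p.support ∧ x ∈ A ∧ y ∈ B ∧ x ∉ B ∧ y ∉ A := by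
  induction p with
  | nil =>
    intro ha hb _
    exact Or.inl ⟨_, by simp, ha, hb⟩
  | @cons a c b hadj q ih =>
    intro ha hb hsup
    by_cases haB : a ∈ B
    · exact Or.inl ⟨a, by simp, ha, haB⟩
    by_cases hcA : c ∈ A
    · have hsup' : ∀ s ∈ q.support, s ∈ A ∪ B := fun s hs => hsup s (by simp [hs])
      rcases ih hcA hb hsup' with ⟨m, hm, hmA, hmB⟩ | ⟨x, y, h1, h2, h3, h4, h5, h6, h7⟩
      · exact Or.inl ⟨m, by simp [hm], hmA, hmB⟩
      · exact Or.inr ⟨x, y, h1, by simp [h2], by simp [h3], h4, h5, h6, h7⟩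
    · have hcB : c ∈ B := by
        rcases hsup c (by simp) with h | h
        · exact absurd h hcA
        · exact h
      exact Or.inr ⟨a, c, hadj, by simp, by simp, ha, hcB, haB, hcA⟩

/-- Two shortest segments through a common point give a shortest-path condition. -/
lemma onShortestPath_of_mid (G : SimpleGraph V) (hconn : G.Connected) {a b m : V}
    (hm : G.dist a m + G.dist m b = G.dist a b) : OnShortestPath G a b m m := by
  obtain ⟨p1, hp1⟩ := hconn.exists_walk_length_eq_dist a m
  obtain ⟨p2, hp2⟩ := hconn.exists_walk_length_eq_dist m b
  refine ⟨p1.append p2, ?_, ?_, ?_⟩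
  · rw [Walk.length_append, hp1, hp2, hm]
  · rw [Walk.mem_support_append_iff]; exact Or.inl (Walk.end_mem_support p1)
  · rw [Walk.mem_support_append_iff]; exact Or.inl (Walk.end_mem_support p1)

/-- A shortest segment, an edge, and a shortest segment, with correct total length. -/
lemma onShortestPath_of_edge (G : SimpleGraph V) (hconn : G.Connected) {a b y z : V}
    (hadj : G.Adj y z)
    (hlen : G.dist a y + 1 + G.dist z b = G.dist a b) : OnShortestPath G a b y z := by
  obtain ⟨p1, hp1⟩ := hconn.exists_walk_length_eq_dist a y
  obtain ⟨p2, hp2⟩ := hconn.exists_walk_length_eq_dist z b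
  refine ⟨p1.append (Walk.cons hadj p2), ?_, ?_, ?_⟩
  · rw [Walk.length_append, Walk.length_cons, hp1, hp2]; omega
  · rw [Walk.mem_support_append_iff]; exact Or.inl (Walk.end_mem_support p1)
  · rw [Walk.mem_support_append_iff]
    exact Or.inr (by simp [Walk.support_cons])

theorem key_exists
    (G : SimpleGraph V) (hconn : G.Connected) (r : V)
    (htc : RootedTriangleCondition G r)
    (h : ∀ X : Set V, IsIsometricSubset G (daisySet G r X)) (u v : V) :
    ∃ x y z : V, PseudoMedianConds G u v r x y z ∧ G.dist x y ≤ 1 := by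
  set A : Set V := interval G r u with hA
  set B : Set V := interval G r v with hB
  have hDA : A ⊆ daisySet G r {u, v} := by
    intro s hs
    simp only [daisySet, Set.mem_iUnion]
    exact ⟨u, Or.inl rfl, hs⟩
  have hDB : B ⊆ daisySet G r {u, v} := by
    intro s hs
    simp only [daisySet, Set.mem_iUnion]
    exact ⟨v, Or.inr rfl, hs⟩
  have hDmem : ∀ s ∈ daisySet G r {u, v}, s ∈ A ∪ B := by
    intro s hs
    simp only [daisySet, Set.mem_iUnion] at hs
    obtain ⟨w, hw, hsw⟩ := hs
    rcases hw with rfl | rfl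
    · exact Or.inl hsw
    · exact Or.inr hsw
  have huA : u ∈ A := by simp [hA, interval, SimpleGraph.dist_self]
  have hvB : v ∈ B := by simp [hB, interval, SimpleGraph.dist_self]
  by_cases huv : u = v
  · subst huv
    refine ⟨u, u, u, ⟨?_, ?_, ?_, ?_, ?_⟩, ?_⟩
    · exact ⟨Walk.nil, by simp [SimpleGraph.dist_self], by simp, by simp⟩
    · exact onShortestPath_of_mid G hconn (by simp [SimpleGraph.dist_self])
    · exact onShortestPath_of_mid G hconn (by simp [SimpleGraph.dist_self])
    · rfl
    · rfl
    · simp [SimpleGraph.dist_self]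
  -- get a shortest u,v-walk inside the daisy
  have hu' : u ∈ daisySet G r {u, v} := hDA huA
  have hv' : v ∈ daisySet G r {u, v} := hDB hvB
  have hd := h {u, v} ⟨u, hu'⟩ ⟨v, hv'⟩
  have hdne : G.dist u v ≠ 0 :=
    (SimpleGraph.dist_ne_zero_iff_ne_and_reachable).2 ⟨huv, hconn u v⟩
  have hne' : (G.induce (daisySet G r {u, v})).dist ⟨u, hu'⟩ ⟨v, hv'⟩ ≠ 0 := by
    rw [hd]; exact hdne
  obtain ⟨q, hq⟩ := SimpleGraph.exists_walk_of_dist_ne_zero hne'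
  let f : G.induce (daisySet G r {u, v}) →g G := ⟨Subtype.val, fun {a b} hab => hab⟩
  let p : G.Walk u v := q.map f
  have hlen : p.length = G.dist u v := by
    rw [Walk.length_map, hq, hd]
  have hsupp : ∀ s ∈ p.support, s ∈ A ∪ B := by
    intro s hs
    rw [Walk.support_map, List.mem_map] at hs
    obtain ⟨t, _, rfl⟩ := hs
    exact hDmem _ t.2
  rcases walk_sep p huA hvB hsupp with
    ⟨m, hm, hmA, hmB⟩ | ⟨x, y, hadj, hxp, hyp, hxA, hyB, hxB, hyA⟩
  · -- size 0 candidate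
    refine ⟨m, m, m, ⟨⟨p, hlen, hm, hm⟩, ?_, ?_, rfl, rfl⟩, by simp [SimpleGraph.dist_self]⟩
    · refine onShortestPath_of_mid G hconn ?_
      have := hmB
      simp only [hB, interval, Set.mem_setOf_eq] at this
      have e1 : G.dist v m = G.dist m v := SimpleGraph.dist_comm
      have e2 : G.dist m r = G.dist r m := SimpleGraph.dist_comm
      have e3 : G.dist v r = G.dist r v := SimpleGraph.dist_comm
      omega
    · refine onShortestPath_of_mid G hconn ?_
      have := hmA
      simp only [hA, interval, Set.mem_setOf_eq] at this
      have e1 : G.dist u m = G.dist m u := SimpleGraph.dist_comm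
      have e2 : G.dist m r = G.dist r m := SimpleGraph.dist_comm
      have e3 : G.dist u r = G.dist r u := SimpleGraph.dist_comm
      omega
  · -- size 1 candidate
    simp only [hA, interval, Set.mem_setOf_eq] at hxA hyA
    simp only [hB, interval, Set.mem_setOf_eq] at hyB hxB
    have hxy1 : G.dist x y = 1 := SimpleGraph.dist_eq_one_iff_adj.2 hadj
    have htri1 : G.dist r y ≤ G.dist r x + 1 := by
      have := hconn.dist_triangle (u := r) (v := x) (w := y)
      omega
    have htri2 : G.dist r x ≤ G.dist r y + 1 := by
      have h' : G.dist y x = 1 := SimpleGraph.dist_eq_one_iff_adj.2 hadj.symm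
      have := hconn.dist_triangle (u := r) (v := y) (w := x)
      omega
    have heq : G.dist r x = G.dist r y := by
      by_contra hne
      rcases Nat.lt_or_ge (G.dist r x) (G.dist r y) with hlt | hge
      · -- d r y = d r x + 1 : derive x ∈ B
        have hry : G.dist r y = G.dist r x + 1 := by omega
        apply hxB
        have h1 : G.dist x v ≤ 1 + G.dist y v := by
          have := hconn.dist_triangle (u := x) (v := y) (w := v)
          omega
        have h2 : G.dist r v ≤ G.dist r x + G.dist x v := hconn.dist_triangle
        omega
      · have hrx : G.dist r x = G.dist r y + 1 := by omega
        apply hyA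
        have h1 : G.dist y u ≤ 1 + G.dist x u := by
          have h' : G.dist y x = 1 := SimpleGraph.dist_eq_one_iff_adj.2 hadj.symm
          have := hconn.dist_triangle (u := y) (v := x) (w := u)
          omega
        have h2 : G.dist r u ≤ G.dist r y + G.dist y u := hconn.dist_triangle
        omega
    have hk0 : G.dist r x ≠ 0 := by
      intro h0
      have hx : r = x := (hconn.dist_eq_zero_iff).1 h0
      have hy : r = y := (hconn.dist_eq_zero_iff).1 (heq ▸ h0)
      exact hadj.ne (hx ▸ hy ▸ rfl)
    obtain ⟨z, hzx, hzy, hzd⟩ :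
        ∃ z : V, G.Adj z x ∧ G.Adj z y ∧ G.dist r z + 1 = G.dist r x := by
      rcases Nat.lt_or_ge (G.dist r x) 2 with hlt | hge
      · have h1 : G.dist r x = 1 := by omega
        refine ⟨r, SimpleGraph.dist_eq_one_iff_adj.1 h1,
          SimpleGraph.dist_eq_one_iff_adj.1 (heq ▸ h1), ?_⟩
        rw [SimpleGraph.dist_self]; omega
      · exact htc x y hadj heq hge
    refine ⟨x, y, z, ⟨⟨p, hlen, hxp, hyp⟩, ?_, ?_, ?_, ?_⟩, by omega⟩
    · -- v .. y - z .. r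
      refine onShortestPath_of_edge G hconn hzy.symm ?_
      have e1 : G.dist v y = G.dist y v := SimpleGraph.dist_comm
      have e2 : G.dist z r = G.dist r z := SimpleGraph.dist_comm
      have e3 : G.dist v r = G.dist r v := SimpleGraph.dist_comm
      omega
    · -- u .. x - z .. r
      refine onShortestPath_of_edge G hconn hzx.symm ?_
      have e1 : G.dist u x = G.dist x u := SimpleGraph.dist_comm
      have e2 : G.dist z r = G.dist r z := SimpleGraph.dist_comm
      have e3 : G.dist u r = G.dist r u := SimpleGraph.dist_comm
      omega
    · rw [hxy1, SimpleGraph.dist_eq_one_iff_adj.2 hzy.symm]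
    · rw [SimpleGraph.dist_eq_one_iff_adj.2 hzy.symm,
        SimpleGraph.dist_eq_one_iff_adj.2 hzx.symm]

/-- Let `G` be a connected rooted graph with root `r` satisfying the rooted
triangle condition. If every daisy graph of `G` with respect to `r` is isometric in `G`, then
every triple `(u,v,r)` has a pseudo-median of size 0 or 1. -/
theorem pseudoMedian_of_all_daisy_isometric
    (G : SimpleGraph V) (hconn : G.Connected) (r : V)
    (htc : RootedTriangleCondition G r)
    (h : ∀ X : Set V, IsIsometricSubset G (daisySet G r X)) :
    ∀ u v : V, HasPseudoMedianOfSize G u v r 0 ∨ HasPseudoMedianOfSize G u v r 1 := by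
  intro u v
  obtain ⟨x, y, z, hc, hle⟩ := key_exists G hconn r htc h u v
  by_cases h0 : ∃ x' y' z' : V, PseudoMedianConds G u v r x' y' z' ∧ G.dist x' y' = 0
  · left
    obtain ⟨x', y', z', hc', h0'⟩ := h0
    exact ⟨x', y', z', ⟨hc', fun a b c _ => by omega⟩, h0'⟩
  · right
    have h1 : G.dist x y = 1 := by
      rcases Nat.lt_or_ge (G.dist x y) 1 with hlt | hge
      · exact absurd ⟨x, y, z, hc, by omega⟩ h0
      · omega
    refine ⟨x, y, z, ⟨hc, fun a b c hc' => ?_⟩, h1⟩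
    have : G.dist a b ≠ 0 := fun hz => h0 ⟨a, b, c, hc', hz⟩
    omega

end Daisy
end

section
/- Let G be a rooted graph with root r that satisfies the rooted triangle condition, and let u, v be vertices of G. If the daisy graph G_r({u,v}) is an isometric subgraph of G, then there exists a pseudo-median of the triple (u, v, r) of size 0 or 1 in G. -/
open SimpleGraph

namespace Daisy

variable {V : Type*}

section Aux

variable {G : SimpleGraph V} {a b : V}

private lemma getVert_mem_support' (p : G.Walk a b) (i : ℕ) : p.getVert i ∈ p.support := by
  induction p generalizing i with
  | nil => simp [SimpleGraph.Walk.getVert]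
  | cons h q ih =>
    cases i with
    | zero => simp
    | succ n => simp only [SimpleGraph.Walk.getVert_cons_succ]; exact List.mem_cons_of_mem _ (ih n)

private lemma dist_getVert_le (hconn : G.Connected) (p : G.Walk a b) (i : ℕ) :
    G.dist a (p.getVert i) ≤ i := by
  induction p generalizing i with
  | nil => simp [SimpleGraph.Walk.getVert, SimpleGraph.dist_self]
  | @cons u w b h q ih =>
    cases i with
    | zero => simp
    | succ n =>
      simp only [SimpleGraph.Walk.getVert_cons_succ]
      have h1 : G.dist u w = 1 := SimpleGraph.dist_eq_one_iff_adj.mpr h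
      have h2 := ih n
      have h3 : G.dist u (q.getVert n) ≤ G.dist u w + G.dist w (q.getVert n) :=
        hconn.dist_triangle
      omega

private lemma dist_getVert_right_le (p : G.Walk a b) (i : ℕ) :
    G.dist (p.getVert i) b ≤ p.length - i := by
  induction p generalizing i with
  | nil => simp [SimpleGraph.Walk.getVert, SimpleGraph.dist_self]
  | @cons u w b h q ih =>
    cases i with
    | zero =>
      simpa using SimpleGraph.dist_le (SimpleGraph.Walk.cons h q)
    | succ n =>
      simp only [SimpleGraph.Walk.getVert_cons_succ, SimpleGraph.Walk.length_cons]
      calc G.dist (q.getVert n) b ≤ q.length - n := ih n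
        _ ≤ q.length + 1 - (n + 1) := by omega

private lemma onsp (hconn : G.Connected) {a b x y : V}
    (hsum : G.dist a x + G.dist x y + G.dist y b = G.dist a b) :
    OnShortestPath G a b x y := by
  obtain ⟨p1, h1⟩ := hconn.exists_walk_length_eq_dist a x
  obtain ⟨p2, h2⟩ := hconn.exists_walk_length_eq_dist x y
  obtain ⟨p3, h3⟩ := hconn.exists_walk_length_eq_dist y b
  refine ⟨p1.append (p2.append p3), ?_, ?_, ?_⟩
  · simp only [SimpleGraph.Walk.length_append]; omega
  · exact SimpleGraph.Walk.subset_support_append_left _ _ p1.end_mem_support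
  · exact SimpleGraph.Walk.subset_support_append_right _ _
      (SimpleGraph.Walk.subset_support_append_left _ _ p2.end_mem_support)

end Aux

/-- Let `G` be a connected rooted graph with root `r` satisfying the rooted
triangle condition and let `u`, `v` be vertices of `G`. If the daisy graph `G_r({u,v})` is
isometric in `G`, then the triple `(u,v,r)` has a pseudo-median of size 0 or 1 in `G`. -/
theorem pseudoMedian_of_daisy_pair_isometric
    (G : SimpleGraph V) (hconn : G.Connected) (r : V)
    (htc : RootedTriangleCondition G r) (u v : V)
    (h : IsIsometricSubset G (daisySet G r {u, v})) :
    HasPseudoMedianOfSize G u v r 0 ∨ HasPseudoMedianOfSize G u v r 1 := by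
  classical
  by_cases hmed : ∃ m : V, PseudoMedianConds G u v r m m m
  · left
    obtain ⟨m, hm⟩ := hmed
    exact ⟨m, m, m, ⟨hm, fun x' y' z' _ => by simp [SimpleGraph.dist_self]⟩,
      SimpleGraph.dist_self⟩
  · right
    -- a vertex on a u,v-geodesic lying in both intervals would be a median
    have hmed' : ∀ m : V, G.dist u m + G.dist m v = G.dist u v →
        m ∈ interval G r u → m ∈ interval G r v → False := by
      intro m hm h1 h2
      simp only [interval, Set.mem_setOf_eq] at h1 h2
      apply hmed
      have c1 : G.dist v m = G.dist m v := SimpleGraph.dist_comm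
      have c2 : G.dist m r = G.dist r m := SimpleGraph.dist_comm
      have c3 : G.dist v r = G.dist r v := SimpleGraph.dist_comm
      have c4 : G.dist u r = G.dist r u := SimpleGraph.dist_comm
      have c5 : G.dist m u = G.dist u m := SimpleGraph.dist_comm
      refine ⟨m, onsp hconn ?_, onsp hconn ?_, onsp hconn ?_, rfl, rfl⟩
      · rw [SimpleGraph.dist_self]; omega
      · rw [SimpleGraph.dist_self]; omega
      · rw [SimpleGraph.dist_self]; omega
    have hne : u ≠ v := by
      rintro rfl
      exact hmed ⟨u, onsp hconn (by simp [SimpleGraph.dist_self]),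
        onsp hconn (by simp [SimpleGraph.dist_self]),
        onsp hconn (by simp [SimpleGraph.dist_self]), rfl, rfl⟩
    set D := daisySet G r {u, v} with hD
    have huD : u ∈ D := by
      simp only [hD, daisySet, Set.mem_iUnion]
      exact ⟨u, Or.inl rfl, by simp [interval, SimpleGraph.dist_self]⟩
    have hvD : v ∈ D := by
      simp only [hD, daisySet, Set.mem_iUnion]
      exact ⟨v, Or.inr rfl, by simp [interval, SimpleGraph.dist_self]⟩
    have hc0 : G.dist u v ≠ 0 := fun h0 => hne (hconn.dist_eq_zero_iff.mp h0)
    have hdind : (G.induce D).dist ⟨u, huD⟩ ⟨v, hvD⟩ = G.dist u v := h ⟨u, huD⟩ ⟨v, hvD⟩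
    obtain ⟨q, hq⟩ := SimpleGraph.exists_walk_of_dist_ne_zero (by rw [hdind]; exact hc0)
    let f : G.induce D →g G := ⟨Subtype.val, fun ha => ha⟩
    let p : G.Walk u v := q.map f
    have hplen : p.length = G.dist u v := by
      show (q.map f).length = G.dist u v
      rw [SimpleGraph.Walk.length_map, hq, hdind]
    have hpsup : ∀ w ∈ p.support, w ∈ D := by
      intro w hw
      have : w ∈ (q.map f).support := hw
      rw [SimpleGraph.Walk.support_map] at this
      obtain ⟨z, _, rfl⟩ := List.mem_map.mp this
      exact z.2
    have hgeo : ∀ j, j ≤ G.dist u v →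
        G.dist u (p.getVert j) = j ∧ G.dist (p.getVert j) v = G.dist u v - j := by
      intro j hj
      have h1 := dist_getVert_le hconn p j
      have h2 := dist_getVert_right_le p j
      rw [hplen] at h2
      have h3 : G.dist u v ≤ G.dist u (p.getVert j) + G.dist (p.getVert j) v :=
        hconn.dist_triangle
      omega
    have hAc : p.getVert (G.dist u v) ∉ interval G r u := by
      have hgv : p.getVert (G.dist u v) = v := by rw [← hplen]; exact p.getVert_length
      rw [hgv]
      intro hvIu
      exact hmed' v (by simp [SimpleGraph.dist_self]) hvIu
        (by simp [interval, SimpleGraph.dist_self])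
    have hP : ∃ j, j ≤ G.dist u v ∧ p.getVert j ∉ interval G r u :=
      ⟨G.dist u v, le_refl _, hAc⟩
    obtain ⟨hj0le, hj0not⟩ := Nat.find_spec hP
    set j0 := Nat.find hP with hj0def
    have hj0pos : 0 < j0 := by
      rcases Nat.eq_zero_or_pos j0 with h0 | h0
      · exfalso
        apply hj0not
        rw [h0, p.getVert_zero]
        simp [interval, SimpleGraph.dist_self]
      · exact h0
    set i := j0 - 1 with hidef
    have hsucc : i + 1 = j0 := by omega
    have hAi : p.getVert i ∈ interval G r u := by
      by_contra hno
      have : j0 ≤ i := Nat.find_le ⟨by omega, hno⟩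
      omega
    have hilt : i + 1 ≤ G.dist u v := by omega
    set x := p.getVert i with hxdef
    set y := p.getVert (i + 1) with hydef
    have hy_not : y ∉ interval G r u := by
      have : y = p.getVert j0 := by rw [← hsucc]
      rw [this]; exact hj0not
    have hadj : G.Adj x y := p.adj_getVert_succ (by rw [hplen]; omega)
    have hyD : y ∈ D := hpsup _ (getVert_mem_support' p (i + 1))
    have hyv : y ∈ interval G r v := by
      have hor : y ∈ interval G r u ∨ y ∈ interval G r v := by
        simp only [hD, daisySet, Set.mem_iUnion, Set.mem_insert_iff,
          Set.mem_singleton_iff] at hyD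
        obtain ⟨t, ht, hmem⟩ := hyD
        rcases ht with rfl | rfl
        · exact Or.inl hmem
        · exact Or.inr hmem
      tauto
    obtain ⟨hux, hxv⟩ := hgeo i (by omega)
    obtain ⟨huy, hyv2⟩ := hgeo (i + 1) hilt
    rw [← hxdef] at hux hxv
    rw [← hydef] at huy hyv2
    have hxI : G.dist r x + G.dist x u = G.dist r u := hAi
    have hyI : G.dist r y + G.dist y v = G.dist r v := hyv
    have hdxy : G.dist x y = 1 := SimpleGraph.dist_eq_one_iff_adj.mpr hadj
    have hyx : G.dist y x = 1 := by rw [SimpleGraph.dist_comm]; exact hdxy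
    have hx_notv : x ∉ interval G r v := fun hxv2 => hmed' x (by omega) hAi hxv2
    have tri1 : G.dist r x ≤ G.dist r y + G.dist y x := hconn.dist_triangle
    have tri2 : G.dist r y ≤ G.dist r x + G.dist x y := hconn.dist_triangle
    have hreq : G.dist r x = G.dist r y := by
      by_contra hne2
      rcases lt_or_gt_of_ne hne2 with hlt | hgt
      · apply hx_notv
        have h6 : G.dist x v ≤ G.dist x y + G.dist y v := hconn.dist_triangle
        have h7 : G.dist r v ≤ G.dist r x + G.dist x v := hconn.dist_triangle
        simp only [interval, Set.mem_setOf_eq]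
        omega
      · apply hy_not
        have h6 : G.dist y u ≤ G.dist y x + G.dist x u := hconn.dist_triangle
        have h7 : G.dist r u ≤ G.dist r y + G.dist y u := hconn.dist_triangle
        simp only [interval, Set.mem_setOf_eq]
        omega
    have hrx0 : G.dist r x ≠ 0 := by
      intro h0
      have hxr : x = r := (hconn.dist_eq_zero_iff.mp h0).symm
      apply hx_notv
      rw [hxr]
      simp [interval, SimpleGraph.dist_self]
    obtain ⟨z, hzx, hzy, hz⟩ : ∃ z, G.Adj z x ∧ G.Adj z y ∧ G.dist r z + 1 = G.dist r x := by
      rcases Nat.lt_or_ge (G.dist r x) 2 with hsm | hbig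
      · have h1 : G.dist r x = 1 := by omega
        have h2 : G.dist r y = 1 := by omega
        exact ⟨r, SimpleGraph.dist_eq_one_iff_adj.mp h1,
          SimpleGraph.dist_eq_one_iff_adj.mp h2, by rw [SimpleGraph.dist_self, h1]⟩
      · exact htc x y hadj hreq hbig
    have hdyz : G.dist y z = 1 := SimpleGraph.dist_eq_one_iff_adj.mpr hzy.symm
    have hdxz : G.dist x z = 1 := SimpleGraph.dist_eq_one_iff_adj.mpr hzx.symm
    have c1 : G.dist v y = G.dist y v := SimpleGraph.dist_comm
    have c2 : G.dist z r = G.dist r z := SimpleGraph.dist_comm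
    have c3 : G.dist v r = G.dist r v := SimpleGraph.dist_comm
    have c4 : G.dist u r = G.dist r u := SimpleGraph.dist_comm
    have c5 : G.dist u x = G.dist x u := SimpleGraph.dist_comm
    refine ⟨x, y, z,
      ⟨⟨⟨p, hplen, getVert_mem_support' p i, getVert_mem_support' p (i + 1)⟩,
        onsp hconn (by omega), onsp hconn (by omega), by omega, by omega⟩, ?_⟩, hdxy⟩
    intro x' y' z' hcond
    rw [hdxy]
    by_contra hlt
    have h0 : G.dist x' y' = 0 := by omega
    have hxy' : x' = y' := hconn.dist_eq_zero_iff.mp h0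
    obtain ⟨o1, o2, o3, e1, e2⟩ := hcond
    have h1 : G.dist y' z' = 0 := by omega
    have hyz' : y' = z' := hconn.dist_eq_zero_iff.mp h1
    subst hxy'
    subst hyz'
    exact hmed ⟨x', o1, o2, o3, rfl, rfl⟩

end Daisy
end

section
/- Let G be an isometric daisy graph of a Hamming graph H = H_{k_1,…,k_n} with respect to 0^n, where H is the smallest possible such Hamming graph. Then every △-class of edges of G contains an edge having 0^n as an endpoint. -/
/-!
In a Hamming graph the distance is the Hamming distance, so the interval `I(r, w)` consists of
the vertices whose every coordinate agrees with `r` or with `w`; hence a daisy set rooted at `r`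
is closed under resetting coordinates to those of `r`. An edge `uv` of `G` changes a single
coordinate `i`, from `a` to `b`; resetting all other coordinates gives the edge `r[i:=a] r[i:=b]`
of `G`, which is Djoković-related to `uv` since isometry lets distances be computed in the
Hamming graph. If neither `a` nor `b` is the root value, `r`, `r[i:=a]`, `r[i:=b]` form a
triangle of `G`, which relates `r[i:=a] r[i:=b]` to the root edge `r[i:=a] r` by `△`.
-/

open SimpleGraph

namespace Daisy

variable {V : Type*}

/-- The Hamming graph with factors `K_{k i}`: vertices are tuples, two vertices being
adjacent iff they differ in exactly one coordinate. -/
def hammingGraph {ι : Type*} (k : ι → ℕ) : SimpleGraph (∀ i, Fin (k i)) where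
  Adj u v := ∃! i, u i ≠ v i
  symm := by
    constructor
    rintro u v ⟨i, hi, hu⟩
    exact ⟨i, Ne.symm hi, fun j hj => hu j (Ne.symm hj)⟩
  loopless := by
    constructor
    rintro u ⟨i, hi, -⟩
    exact hi rfl

/-- The all-zeros vertex `0^n` of a Hamming graph. -/
def hroot {ι : Type*} (k : ι → ℕ) (hk : ∀ i, 0 < k i) : ∀ i, Fin (k i) :=
  fun i => ⟨0, hk i⟩

/-- `S` is the vertex set of a daisy graph of `G` with respect to the root `r`. -/
def IsDaisySet (G : SimpleGraph V) (r : V) (S : Set V) : Prop :=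
  ∃ X : Set V, S = daisySet G r X

/-- `G` is (isomorphic to) an isometric daisy graph of `H` with respect to the root `r`. -/
def IsIsometricDaisyGraphOf {U : Type*} (G : SimpleGraph U) (H : SimpleGraph V) (r : V) : Prop :=
  ∃ S : Set V, IsDaisySet H r S ∧ IsIsometricSubset H S ∧ Nonempty (G ≃g H.induce S)

/-- `G` is not an isometric daisy graph (w.r.t. the all-zeros root) of any Hamming graph
with fewer vertices than `hammingGraph k`. -/
def SmallestSuch {U : Type*} (G : SimpleGraph U) {n : ℕ} (k : Fin n → ℕ) : Prop :=
  ∀ (m : ℕ) (k' : Fin m → ℕ) (hk' : ∀ i, 0 < k' i),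
    Fintype.card (∀ i, Fin (k' i)) < Fintype.card (∀ i, Fin (k i)) →
    ¬ IsIsometricDaisyGraphOf G (hammingGraph k') (hroot k' hk')

/-- The Djoković relation `~` on (ordered) edges: `(u,v) ~ (x,y)` iff both are edges,
`x ∈ W_{uv} = {z | d(u,z) < d(v,z)}` and `y ∈ W_{vu}`. -/
def sim (G : SimpleGraph V) (p q : V × V) : Prop :=
  G.Adj p.1 p.2 ∧ G.Adj q.1 q.2 ∧
  G.dist p.1 q.1 < G.dist p.2 q.1 ∧ G.dist p.2 q.2 < G.dist p.1 q.2

/-- Brešar's relation `△` on edges: `uv △ xy` iff `uv ~ xy` or there is a clique containing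
edges `e`, `f` with `xy ~ e` and `uv ~ f`. -/
def tri (G : SimpleGraph V) (p q : V × V) : Prop :=
  sim G p q ∨ ∃ (T : Set V) (e f : V × V),
    G.IsClique T ∧ e.1 ∈ T ∧ e.2 ∈ T ∧ f.1 ∈ T ∧ f.2 ∈ T ∧ sim G q e ∧ sim G p f

/-- The `△`-class of the edge `p`: the class of `p` under the equivalence relation
generated by `△` (in partial Hamming graphs `△` is itself an equivalence relation). -/
def triClass (G : SimpleGraph V) (p : V × V) : Set (V × V) :=
  {q | Relation.EqvGen (tri G) p q}


section Relations

variable {G : SimpleGraph V}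

lemma sim_self {u v : V} (h : G.Adj u v) : sim G (u, v) (u, v) :=
  ⟨h, h, by simp [dist_comm, dist_eq_one_iff_adj.2 h]⟩

lemma tri_of_isClique {T : Set V} (hT : G.IsClique T) {u v x y : V} (hu : u ∈ T) (hv : v ∈ T)
    (hx : x ∈ T) (hy : y ∈ T) (huv : u ≠ v) (hxy : x ≠ y) : tri G (u, v) (x, y) :=
  Or.inr ⟨T, (x, y), (u, v), hT, hx, hy, hu, hv,
    sim_self (hT hx hy hxy), sim_self (hT hu hv huv)⟩

lemma IsIsometricSubset.sim_induce_iff {S : Set V} (hS : IsIsometricSubset G S)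
    {p q : S × S} : sim (G.induce S) p q ↔ sim G (p.1.1, p.2.1) (q.1.1, q.2.1) := by
  simp only [sim, comap_adj, Function.Embedding.subtype_apply, hS p.1, hS p.2]

end Relations

section Hamming

variable {ι : Type*} {k : ι → ℕ}

lemma hammingGraph_adj_iff {u v : ∀ i, Fin (k i)} :
    (hammingGraph k).Adj u v ↔ ∃ i, u i ≠ v i ∧ ∀ j ≠ i, u j = v j :=
  exists_congr fun _ => and_congr_right fun _ => forall_congr' fun _ => not_imp_comm

lemma hammingGraph_isClique_line (x : ∀ i, Fin (k i)) (i : ι) :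
    (hammingGraph k).IsClique {y | ∀ j ≠ i, y j = x j} := by
  intro y hy z hz hyz
  have hi : y i ≠ z i := fun h => hyz <| funext fun j => by
    by_cases hj : j = i
    · exact hj ▸ h
    · exact (hy j hj).trans (hz j hj).symm
  exact hammingGraph_adj_iff.2 ⟨i, hi, fun j hj => (hy j hj).trans (hz j hj).symm⟩

variable [Fintype ι]

lemma hammingDist_eq_add_one {β : ι → Type*} [∀ i, DecidableEq (β i)] {x x' y : ∀ i, β i}
    {i : ι} (hoff : ∀ j ≠ i, x' j = x j) (hx : x i = y i) (hx' : x' i ≠ y i) :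
    hammingDist x' y = hammingDist x y + 1 := by
  classical
  have hfilter : Finset.univ.filter (fun j => x' j ≠ y j) =
      insert i (Finset.univ.filter fun j => x j ≠ y j) := by
    ext j
    by_cases hj : j = i
    · subst hj; simp [hx, hx']
    · simp [hj, hoff j hj]
  rw [hammingDist, hammingDist, hfilter, Finset.card_insert_of_notMem (by simp [hx])]

lemma hammingDist_le_length {u v : ∀ i, Fin (k i)} (p : (hammingGraph k).Walk u v) :
    hammingDist u v ≤ p.length := by
  induction p with
  | nil => simp
  | @cons a b c hab p ih =>
    obtain ⟨i, hne, hoff⟩ := hammingGraph_adj_iff.1 hab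
    have hab1 : hammingDist a b = 1 := by
      simpa using hammingDist_eq_add_one (x := b) hoff rfl hne
    calc hammingDist a c ≤ hammingDist a b + hammingDist b c := hammingDist_triangle _ _ _
      _ ≤ (Walk.cons hab p).length := by rw [Walk.length_cons, hab1]; omega

lemma exists_walk_length_eq_hammingDist (u v : ∀ i, Fin (k i)) :
    ∃ p : (hammingGraph k).Walk u v, p.length = hammingDist u v := by
  classical
  induction hd : hammingDist u v generalizing u with
  | zero => rw [hammingDist_eq_zero] at hd; subst hd; exact ⟨.nil, rfl⟩
  | succ m ih =>
    have huv : u ≠ v := hammingDist_ne_zero.1 (by omega)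
    obtain ⟨i, hi⟩ := Function.ne_iff.1 huv
    set u' := Function.update u i (v i)
    have hoff : ∀ j ≠ i, u' j = u j := fun j hj => Function.update_of_ne hj _ _
    have hu' : u' i = v i := Function.update_self ..
    have hadj : (hammingGraph k).Adj u u' :=
      hammingGraph_adj_iff.2 ⟨i, hu' ▸ hi, fun j hj => (hoff j hj).symm⟩
    have hd' : hammingDist u' v = m := by
      have := hammingDist_eq_add_one (x := u') (fun j hj => (hoff j hj).symm) hu' hi
      omega
    obtain ⟨p, hp⟩ := ih u' hd'
    exact ⟨.cons hadj p, by rw [Walk.length_cons, hp]⟩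

lemma hammingGraph_dist (u v : ∀ i, Fin (k i)) :
    (hammingGraph k).dist u v = hammingDist u v := by
  obtain ⟨p, hp⟩ := exists_walk_length_eq_hammingDist u v
  obtain ⟨q, hq⟩ := p.reachable.exists_walk_length_eq_dist
  exact le_antisymm (hp ▸ dist_le p) (hq ▸ hammingDist_le_length q)

lemma mem_interval_hammingGraph_iff {r w x : ∀ i, Fin (k i)} :
    x ∈ interval (hammingGraph k) r w ↔ ∀ j, x j = r j ∨ x j = w j := by
  simp only [interval, Set.mem_ofPred_eq, hammingGraph_dist, hammingDist, Finset.card_filter,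
    ← Finset.sum_add_distrib]
  have hle : ∀ j ∈ Finset.univ, (if r j ≠ w j then 1 else 0) ≤
      ((if r j ≠ x j then 1 else 0) + (if x j ≠ w j then 1 else 0) : ℕ) := by
    intro j _
    split_ifs <;> simp_all
  rw [eq_comm, Finset.sum_eq_sum_iff_of_le hle]
  refine forall_congr' fun j => ?_
  simp only [Finset.mem_univ, true_implies]
  split_ifs <;> grind

lemma IsDaisySet.mem_of_forall_eq_or_eq {r : ∀ i, Fin (k i)} {S : Set (∀ i, Fin (k i))}
    (hS : IsDaisySet (hammingGraph k) r S) {x y : ∀ i, Fin (k i)} (hx : x ∈ S)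
    (hy : ∀ j, y j = x j ∨ y j = r j) : y ∈ S := by
  obtain ⟨X, rfl⟩ := hS
  simp only [daisySet, Set.mem_iUnion, mem_interval_hammingGraph_iff] at hx ⊢
  obtain ⟨w, hw, hxw⟩ := hx
  refine ⟨w, hw, fun j => ?_⟩
  rcases hy j with h | h
  · exact h ▸ hxw j
  · exact Or.inl h

lemma IsDaisySet.update_mem [DecidableEq ι] {r : ∀ i, Fin (k i)} {S : Set (∀ i, Fin (k i))}
    (hS : IsDaisySet (hammingGraph k) r S) {x : ∀ i, Fin (k i)} (hx : x ∈ S) (i : ι) :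
    Function.update r i (x i) ∈ S :=
  hS.mem_of_forall_eq_or_eq hx fun j => by
    by_cases hj : j = i
    · exact .inl (hj ▸ Function.update_self ..)
    · exact .inr (Function.update_of_ne hj _ _)

lemma hammingGraph_sim_of_eq_of_eq {i : ι} {u v u' v' : ∀ i, Fin (k i)}
    (huv : ∀ j ≠ i, u j = v j) (hu'v' : ∀ j ≠ i, u' j = v' j) (hne : u i ≠ v i)
    (hu : u' i = u i) (hv : v' i = v i) : sim (hammingGraph k) (u, v) (u', v') := by
  have hne' : u' i ≠ v' i := by rwa [hu, hv]
  refine ⟨hammingGraph_adj_iff.2 ⟨i, hne, huv⟩, hammingGraph_adj_iff.2 ⟨i, hne', hu'v'⟩,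
    ?_, ?_⟩ <;> simp only [hammingGraph_dist]
  · rw [hammingDist_eq_add_one (fun j hj => (huv j hj).symm) hu.symm (hu ▸ hne.symm)]
    omega
  · rw [hammingDist_eq_add_one huv hv.symm (hv ▸ hne)]
    omega

end Hamming

theorem triClass_has_edge_at_root_general
    (n : ℕ) (k : Fin n → ℕ) (hk : ∀ i, 0 < k i)
    (S : Set (∀ i, Fin (k i)))
    (hdaisy : IsDaisySet (hammingGraph k) (hroot k hk) S)
    (hisom : IsIsometricSubset (hammingGraph k) S)
    (p : S × S) (hp : ((hammingGraph k).induce S).Adj p.1 p.2) :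
    ∃ q : S × S, q ∈ triClass ((hammingGraph k).induce S) p ∧
      ((q.1 : ∀ i, Fin (k i)) = hroot k hk ∨ (q.2 : ∀ i, Fin (k i)) = hroot k hk) := by
  set r := hroot k hk
  obtain ⟨i, hne, hoff⟩ := hammingGraph_adj_iff.1 hp
  have hr : r ∈ S := hdaisy.mem_of_forall_eq_or_eq p.1.2 fun _ => Or.inr rfl
  have hline : ∀ c, Function.update r i c ∈ {y | ∀ j ≠ i, y j = r j} :=
    fun c j hj => Function.update_of_ne hj _ _
  set a : S := ⟨_, hdaisy.update_mem p.1.2 i⟩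
  set b : S := ⟨_, hdaisy.update_mem p.2.2 i⟩
  have hpab : sim ((hammingGraph k).induce S) p (a, b) := hisom.sim_induce_iff.2 <|
    hammingGraph_sim_of_eq_of_eq hoff (fun j hj => (hline _ j hj).trans (hline _ j hj).symm) hne
      (Function.update_self ..) (Function.update_self ..)
  by_cases ha : p.1.1 i = r i
  · exact ⟨(a, b), .rel _ _ (.inl hpab), .inl (Function.update_eq_self_iff.2 ha)⟩
  by_cases hb : p.2.1 i = r i
  · exact ⟨(a, b), .rel _ _ (.inl hpab), .inr (Function.update_eq_self_iff.2 hb)⟩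
  have hclique : ((hammingGraph k).induce S).IsClique {y : S | ∀ j ≠ i, y.1 j = r j} :=
    isClique_induce_iff.2 <| (hammingGraph_isClique_line r i).subset <| by
      rintro _ ⟨y, hy, rfl⟩; exact hy
  have hab : tri _ (a, b) (a, ⟨r, hr⟩) := tri_of_isClique hclique (hline _) (hline _) (hline _)
    (fun _ _ => rfl) hpab.2.1.ne (Subtype.coe_ne_coe.1 (Function.update_ne_self_iff.2 ha))
  exact ⟨(a, ⟨r, hr⟩), .trans _ _ _ (.rel _ _ (.inl hpab)) (.rel _ _ hab), .inr rfl⟩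

/-- Let `G` (with vertex set `S`) be an isometric daisy graph of a Hamming
graph w.r.t. `0^n`, smallest possible. Then every `△`-class of edges of `G` contains an edge
having `0^n` as an endpoint. -/
theorem triClass_has_edge_at_root
    (n : ℕ) (k : Fin n → ℕ) (hk : ∀ i, 0 < k i)
    (S : Set (∀ i, Fin (k i)))
    (hdaisy : IsDaisySet (hammingGraph k) (hroot k hk) S)
    (hisom : IsIsometricSubset (hammingGraph k) S)
    (hmin : SmallestSuch ((hammingGraph k).induce S) k)
    (p : S × S) (hp : ((hammingGraph k).induce S).Adj p.1 p.2) :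
    ∃ q : S × S, q ∈ triClass ((hammingGraph k).induce S) p ∧
      ((q.1 : ∀ i, Fin (k i)) = hroot k hk ∨ (q.2 : ∀ i, Fin (k i)) = hroot k hk) :=
  triClass_has_edge_at_root_general n k hk S hdaisy hisom p hp

end Daisy
end
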